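/- Let 0 ≤ α < d, δ > 0 and f ∈ L¹(ℝ^d). Then the truncated centered fractional maximal function M_α^δ f, defined by M_α^δ f(x) = sup_{r > δ} r^α · (1/|B(x,r)|) ∫_{B(x,r)} |f(y)| dy, is Lipschitz continuous on ℝ^d. -/

import Mathlib

/-!
For `r > δ` the quantity `r ^ α ⨍_{B(x,r)} |f|` equals `r ^ (α - d) ∫_{B(x,r)} |f| / ω_d`. Since
`B(x,r) ⊆ B(x', r + |x - x'|)`, passing from the centre `x` to `x'` and enlarging the radius by
`|x - x'|` can only increase the integral, while it changes the weight `r ^ (α - d)` by at most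
`(d - α) δ ^ (α - d - 1) |x - x'|` because `t ↦ t ^ (α - d)` is Lipschitz on `(δ, ∞)`. As the
integral is bounded by `‖f‖₁`, this gives
`M f x ≤ M f x' + (d - α) δ ^ (α - d - 1) ‖f‖₁ |x - x'| / ω_d`.
-/

open MeasureTheory

/-- The truncated centered fractional Hardy–Littlewood maximal function
`M_α^δ f(x) = sup_{r > δ} r^α ⨍_{B(x,r)} |f|`. -/
noncomputable def truncCenteredFracMax {d : ℕ} (α δ : ℝ)
    (f : EuclideanSpace ℝ (Fin d) → ℝ) (x : EuclideanSpace ℝ (Fin d)) : ℝ :=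
  ⨆ (r : ℝ) (_ : δ < r), r ^ α * ⨍ y in Metric.ball x r, |f y|

open Metric Set

section WeightedBallIntegralSup

variable {X : Type*} [PseudoMetricSpace X] [MeasurableSpace X] {μ : Measure X}
  {φ : ℝ → ℝ} {δ : ℝ} {g : X → ℝ}

noncomputable def weightedBallIntegralSup (μ : Measure X) (φ : ℝ → ℝ) (δ : ℝ) (g : X → ℝ)
    (x : X) : ℝ :=
  ⨆ (r : ℝ) (_ : δ < r), φ r * ∫ y in ball x r, g y ∂μ

theorem setIntegral_ball_le_setIntegral_ball_add_dist (hg : Integrable g μ) (hg0 : 0 ≤ g)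
    (x y : X) (r : ℝ) :
    ∫ z in ball x r, g z ∂μ ≤ ∫ z in ball y (r + dist x y), g z ∂μ :=
  setIntegral_mono_set hg.integrableOn (.of_forall hg0)
    (.of_forall (ball_subset_ball' le_rfl))

theorem weightedBallIntegralSup_nonneg (hφ0 : ∀ r, δ < r → 0 ≤ φ r) (hg0 : 0 ≤ g) (x : X) :
    0 ≤ weightedBallIntegralSup μ φ δ g x :=
  Real.iSup_nonneg fun r => Real.iSup_nonneg fun hr =>
    mul_nonneg (hφ0 r hr) (setIntegral_nonneg_of_ae (.of_forall hg0))

theorem le_weightedBallIntegralSup (hφB : BddAbove (φ '' Ioi δ))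
    (hg : Integrable g μ) (hg0 : 0 ≤ g) (x : X) {r : ℝ} (hr : δ < r) :
    φ r * ∫ y in ball x r, g y ∂μ ≤ weightedBallIntegralSup μ φ δ g x := by
  obtain ⟨B, hB⟩ := hφB
  have hbdd : BddAbove (range fun r => ⨆ (_ : δ < r), φ r * ∫ y in ball x r, g y ∂μ) := by
    refine ⟨max B 0 * ∫ y, g y ∂μ, forall_mem_range.2 fun s => ?_⟩
    refine Real.iSup_le (fun hs => ?_) (mul_nonneg (le_max_right B 0) (integral_nonneg hg0))
    exact mul_le_mul ((hB ⟨s, hs, rfl⟩).trans (le_max_left B 0))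
      (setIntegral_le_integral hg (.of_forall hg0))
      (setIntegral_nonneg_of_ae (.of_forall hg0)) (le_max_right B 0)
  calc φ r * ∫ y in ball x r, g y ∂μ = ⨆ (_ : δ < r), φ r * ∫ y in ball x r, g y ∂μ := by
        rw [ciSup_pos hr]
    _ ≤ weightedBallIntegralSup μ φ δ g x := le_ciSup hbdd r

theorem weightedBallIntegralSup_le_add {K : NNReal} (hφ0 : ∀ r, δ < r → 0 ≤ φ r)
    (hφB : BddAbove (φ '' Ioi δ)) (hφL : LipschitzOnWith K φ (Ioi δ))
    (hg : Integrable g μ) (hg0 : 0 ≤ g) (x y : X) :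
    weightedBallIntegralSup μ φ δ g x ≤
      weightedBallIntegralSup μ φ δ g y + K * (∫ z, g z ∂μ) * dist x y := by
  have hN : 0 ≤ ∫ z, g z ∂μ := integral_nonneg hg0
  have hrhs : 0 ≤ weightedBallIntegralSup μ φ δ g y + K * (∫ z, g z ∂μ) * dist x y := by
    have := weightedBallIntegralSup_nonneg (μ := μ) hφ0 hg0 y
    positivity
  refine Real.iSup_le (fun r => Real.iSup_le (fun hr => ?_) hrhs) hrhs
  set s := r + dist x y
  have hs : δ < s := hr.trans_le (le_add_of_nonneg_right dist_nonneg)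
  have hI0 : 0 ≤ ∫ z in ball y s, g z ∂μ := setIntegral_nonneg_of_ae (.of_forall hg0)
  have hIN : ∫ z in ball y s, g z ∂μ ≤ ∫ z, g z ∂μ := setIntegral_le_integral hg (.of_forall hg0)
  have hφrs : |φ r - φ s| ≤ K * dist x y := by
    simpa [Real.dist_eq, s, abs_of_nonneg dist_nonneg] using hφL.dist_le_mul r hr s hs
  calc φ r * ∫ z in ball x r, g z ∂μ ≤ φ r * ∫ z in ball y s, g z ∂μ :=
        mul_le_mul_of_nonneg_left (setIntegral_ball_le_setIntegral_ball_add_dist hg hg0 x y r)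
          (hφ0 r hr)
    _ = φ s * ∫ z in ball y s, g z ∂μ + (φ r - φ s) * ∫ z in ball y s, g z ∂μ := by ring
    _ ≤ weightedBallIntegralSup μ φ δ g y + K * dist x y * ∫ z, g z ∂μ := by
        refine add_le_add (le_weightedBallIntegralSup hφB hg hg0 y hs) ?_
        calc (φ r - φ s) * ∫ z in ball y s, g z ∂μ
            ≤ |φ r - φ s| * ∫ z in ball y s, g z ∂μ := by gcongr; exact le_abs_self _
          _ ≤ K * dist x y * ∫ z, g z ∂μ := by gcongr
    _ = weightedBallIntegralSup μ φ δ g y + K * (∫ z, g z ∂μ) * dist x y := by ring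

theorem lipschitzWith_weightedBallIntegralSup {K : NNReal} (hφ0 : ∀ r, δ < r → 0 ≤ φ r)
    (hφB : BddAbove (φ '' Ioi δ)) (hφL : LipschitzOnWith K φ (Ioi δ))
    (hg : Integrable g μ) (hg0 : 0 ≤ g) :
    LipschitzWith (K * ∫ z, g z ∂μ).toNNReal (weightedBallIntegralSup μ φ δ g) :=
  .of_le_add_mul' _ (weightedBallIntegralSup_le_add hφ0 hφB hφL hg hg0)

end WeightedBallIntegralSup

theorem Real.lipschitzOnWith_rpow_Ioi {p δ : ℝ} (hp : p ≤ 0) (hδ : 0 < δ) :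
    LipschitzOnWith (-p * δ ^ (p - 1)).toNNReal (fun r : ℝ => r ^ p) (Ioi δ) := by
  refine (convex_Ioi δ).lipschitzOnWith_of_nnnorm_hasDerivWithin_le
    (fun r hr => (Real.hasDerivAt_rpow_const (.inl (hδ.trans hr).ne')).hasDerivWithinAt)
    fun r (hr : δ < r) => ?_
  rw [← NNReal.coe_le_coe, coe_nnnorm,
    Real.coe_toNNReal _ (mul_nonneg (neg_nonneg.2 hp) (Real.rpow_nonneg hδ.le _)),
    Real.norm_eq_abs, abs_mul, abs_of_nonpos hp, abs_of_pos (Real.rpow_pos_of_pos (hδ.trans hr) _)]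
  exact mul_le_mul_of_nonneg_left (Real.rpow_le_rpow_of_nonpos hδ hr.le (by linarith)) (by linarith)

theorem rpow_mul_setAverage_ball {E : Type*} [NormedAddCommGroup E] [NormedSpace ℝ E]
    [FiniteDimensional ℝ E] [MeasurableSpace E] [BorelSpace E] (μ : Measure E)
    [μ.IsAddHaarMeasure] (α : ℝ) (g : E → ℝ) (x : E) {r : ℝ} (hr : 0 < r) :
    r ^ α * ⨍ y in ball x r, g y ∂μ =
      r ^ (α - Module.finrank ℝ E) * ∫ y in ball x r, (μ.real (ball 0 1))⁻¹ * g y ∂μ := by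
  rw [setAverage_eq, smul_eq_mul, integral_const_mul, measureReal_def,
    Measure.addHaar_ball_of_pos μ x hr, ENNReal.toReal_mul, ENNReal.toReal_ofReal (by positivity),
    ← measureReal_def, Real.rpow_sub hr, Real.rpow_natCast, mul_inv]
  ring

theorem truncCenteredFracMax_eq_weightedBallIntegralSup {d : ℕ} (α : ℝ) {δ : ℝ} (hδ : 0 ≤ δ)
    (f : EuclideanSpace ℝ (Fin d) → ℝ) :
    truncCenteredFracMax α δ f = weightedBallIntegralSup volume (fun r => r ^ (α - d)) δ
      (fun y => (volume.real (ball (0 : EuclideanSpace ℝ (Fin d)) 1))⁻¹ * |f y|) := by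
  ext x
  refine iSup_congr fun r => iSup_congr fun hr => ?_
  rw [rpow_mul_setAverage_ball volume α _ x (hδ.trans_lt hr), finrank_euclideanSpace_fin]

theorem statement2_general {d : ℕ} (α δ : ℝ) (hαd : α < d) (hδ : 0 < δ)
    (f : EuclideanSpace ℝ (Fin d) → ℝ) (hf : Integrable f) :
    ∃ L : NNReal, LipschitzWith L (truncCenteredFracMax α δ f) := by
  have hp : α - d ≤ 0 := by linarith
  rw [truncCenteredFracMax_eq_weightedBallIntegralSup α hδ.le f]
  exact ⟨_, lipschitzWith_weightedBallIntegralSup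
    (fun r hr => Real.rpow_nonneg (hδ.trans hr).le _)
    ⟨δ ^ (α - d), forall_mem_image.2 fun r hr => Real.rpow_le_rpow_of_nonpos hδ hr.le hp⟩
    (Real.lipschitzOnWith_rpow_Ioi hp hδ) (hf.abs.const_mul _)
    fun y => mul_nonneg (inv_nonneg.2 measureReal_nonneg) (abs_nonneg _)⟩

/-- for `0 ≤ α < d`, `δ > 0` and `f ∈ L¹(ℝ^d)`, the truncated
centered fractional maximal function `M_α^δ f` is Lipschitz continuous. -/
theorem statement2 {d : ℕ} (α δ : ℝ) (hα : 0 ≤ α) (hαd : α < d) (hδ : 0 < δ)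
    (f : EuclideanSpace ℝ (Fin d) → ℝ) (hf : Integrable f) :
    ∃ L : NNReal, LipschitzWith L (truncCenteredFracMax α δ f) :=
  statement2_general α δ hαd hδ f hf
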